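/- Let d ≥ 1, let μ₁, μ₂ ∈ ℝ^d and let σ₁, σ₂ ∈ ℝ^d have nonnegative entries. Let p = ⊗_{i=1}^d N(μ₁ᵢ, σ₁ᵢ²) and q = ⊗_{i=1}^d N(μ₂ᵢ, σ₂ᵢ²) be the corresponding Gaussian product measures on ℝ^d (i.e., Gaussians with diagonal covariance). Then for every coupling π of p and q, ∫ ‖x − y‖₂² dπ(x,y) ≥ ‖μ₁ − μ₂‖₂² + Σ_{i=1}^d (σ₁ᵢ − σ₂ᵢ)². -/

import Mathlib

open MeasureTheory ProbabilityTheory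

/-!
For real random variables `X`, `Y` in `L²`, `E[(X - Y)²] = (E X - E Y)² + Var(X - Y)`, and
Cauchy–Schwarz for the covariance gives `Var(X - Y) ≥ (√Var X - √Var Y)²`. Applied to each pair of
coordinates of a coupling, whose laws are `N(μ₁ᵢ, σ₁ᵢ²)` and `N(μ₂ᵢ, σ₂ᵢ²)`, and summed over `i`, this
is the bound; only the one-dimensional marginals of the coupling matter.
-/

namespace ProbabilityTheory

variable {Ω : Type*} {mΩ : MeasurableSpace Ω} {P : Measure Ω} {X Y : Ω → ℝ}

lemma covariance_sq_le_variance_mul_variance [IsFiniteMeasure P] (hX : MemLp X 2 P)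
    (hY : MemLp Y 2 P) : cov[X, Y; P] ^ 2 ≤ Var[X; P] * Var[Y; P] := by
  have hquad (t : ℝ) : 0 ≤ Var[X; P] * (t * t) + (-2 * cov[X, Y; P]) * t + Var[Y; P] := by
    have hvar := variance_nonneg (t • X - Y) P
    rw [variance_sub (hX.const_smul t) hY, variance_smul, covariance_smul_left] at hvar
    linarith
  have hdiscrim := discrim_le_zero hquad
  rw [discrim] at hdiscrim
  linarith

lemma covariance_le_sqrt_variance_mul_sqrt_variance [IsFiniteMeasure P] (hX : MemLp X 2 P)
    (hY : MemLp Y 2 P) : cov[X, Y; P] ≤ √Var[X; P] * √Var[Y; P] := by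
  rw [← Real.sqrt_mul (variance_nonneg X P)]
  exact Real.le_sqrt_of_sq_le (covariance_sq_le_variance_mul_variance hX hY)

lemma sq_sub_sqrt_variance_le_variance_sub [IsFiniteMeasure P] (hX : MemLp X 2 P)
    (hY : MemLp Y 2 P) : (√Var[X; P] - √Var[Y; P]) ^ 2 ≤ Var[X - Y; P] := by
  rw [variance_sub hX hY]
  nlinarith [covariance_le_sqrt_variance_mul_sqrt_variance hX hY,
    Real.sq_sqrt (variance_nonneg X P), Real.sq_sqrt (variance_nonneg Y P)]

lemma sq_sub_integral_add_sq_sub_sqrt_variance_le_integral_sq_sub [IsProbabilityMeasure P]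
    (hX : MemLp X 2 P) (hY : MemLp Y 2 P) :
    (P[X] - P[Y]) ^ 2 + (√Var[X; P] - √Var[Y; P]) ^ 2 ≤ ∫ ω, (X ω - Y ω) ^ 2 ∂P := by
  have hmean : P[X - Y] = P[X] - P[Y] :=
    integral_sub (hX.integrable one_le_two) (hY.integrable one_le_two)
  have hvar := variance_eq_sub (hX.sub hY)
  rw [hmean] at hvar
  have hsd := sq_sub_sqrt_variance_le_variance_sub hX hY
  simp only [Pi.pow_apply, Pi.sub_apply] at hvar
  linarith

variable {m : ℝ} {v : NNReal}

lemma HasLaw.memLp_gaussianReal (hX : HasLaw X (gaussianReal m v) P) (p : NNReal) :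
    MemLp X p P :=
  (hX.map_eq ▸ memLp_id_gaussianReal p).comp_of_map hX.aemeasurable

lemma HasLaw.sq_sub_add_sq_sub_le_integral_sq_sub_of_gaussianReal [IsProbabilityMeasure P]
    {a b s t : ℝ} (hs : 0 ≤ s) (ht : 0 ≤ t)
    (hX : HasLaw X (gaussianReal a (s ^ 2).toNNReal) P)
    (hY : HasLaw Y (gaussianReal b (t ^ 2).toNNReal) P) :
    (a - b) ^ 2 + (s - t) ^ 2 ≤ ∫ ω, (X ω - Y ω) ^ 2 ∂P := by
  have hsdX : √Var[X; P] = s := by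
    rw [hX.variance_eq, variance_id_gaussianReal, Real.coe_toNNReal _ (sq_nonneg s),
      Real.sqrt_sq hs]
  have hsdY : √Var[Y; P] = t := by
    rw [hY.variance_eq, variance_id_gaussianReal, Real.coe_toNNReal _ (sq_nonneg t),
      Real.sqrt_sq ht]
  have hbound := sq_sub_integral_add_sq_sub_sqrt_variance_le_integral_sq_sub
    (hX.memLp_gaussianReal 2) (hY.memLp_gaussianReal 2)
  rwa [hX.integral_eq, hY.integral_eq, integral_id_gaussianReal, integral_id_gaussianReal, hsdX,
    hsdY] at hbound

end ProbabilityTheory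

theorem diag_gaussian_quadratic_cost_lower_bound_general
    (d : ℕ) (μ₁ μ₂ σ₁ σ₂ : Fin d → ℝ)
    (hσ₁ : ∀ i, 0 ≤ σ₁ i) (hσ₂ : ∀ i, 0 ≤ σ₂ i)
    (π : Measure ((Fin d → ℝ) × (Fin d → ℝ))) [IsProbabilityMeasure π]
    (hπ₁ : π.fst = Measure.pi fun i => gaussianReal (μ₁ i) ((σ₁ i) ^ 2).toNNReal)
    (hπ₂ : π.snd = Measure.pi fun i => gaussianReal (μ₂ i) ((σ₂ i) ^ 2).toNNReal) :
    (∑ i, (μ₁ i - μ₂ i) ^ 2) + ∑ i, (σ₁ i - σ₂ i) ^ 2 ≤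
      ∫ z, ∑ i, (z.1 i - z.2 i) ^ 2 ∂π := by
  have hX (i : Fin d) : HasLaw (fun z : (Fin d → ℝ) × (Fin d → ℝ) => z.1 i)
      (gaussianReal (μ₁ i) ((σ₁ i) ^ 2).toNNReal) π :=
    (measurePreserving_eval _ i).hasLaw.comp (Y := Function.eval i) ⟨by fun_prop, hπ₁⟩
  have hY (i : Fin d) : HasLaw (fun z : (Fin d → ℝ) × (Fin d → ℝ) => z.2 i)
      (gaussianReal (μ₂ i) ((σ₂ i) ^ 2).toNNReal) π :=
    (measurePreserving_eval _ i).hasLaw.comp (Y := Function.eval i) ⟨by fun_prop, hπ₂⟩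
  have hint (i : Fin d) :
      Integrable (fun z : (Fin d → ℝ) × (Fin d → ℝ) => (z.1 i - z.2 i) ^ 2) π :=
    (((hX i).memLp_gaussianReal 2).sub ((hY i).memLp_gaussianReal 2)).integrable_sq
  rw [integral_finsetSum _ fun i _ => hint i, ← Finset.sum_add_distrib]
  exact Finset.sum_le_sum fun i _ =>
    (hX i).sq_sub_add_sq_sub_le_integral_sq_sub_of_gaussianReal (hσ₁ i) (hσ₂ i) (hY i)

/-- For Gaussian product measures `p = ⊗ᵢ N(μ₁ᵢ, σ₁ᵢ²)` and `q = ⊗ᵢ N(μ₂ᵢ, σ₂ᵢ²)` on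
`ℝ^d` (diagonal covariance), every coupling `π` of `p` and `q` has quadratic transport
cost at least `‖μ₁ − μ₂‖₂² + Σᵢ (σ₁ᵢ − σ₂ᵢ)²`. -/
theorem diag_gaussian_quadratic_cost_lower_bound
    (d : ℕ) (hd : 1 ≤ d) (μ₁ μ₂ σ₁ σ₂ : Fin d → ℝ)
    (hσ₁ : ∀ i, 0 ≤ σ₁ i) (hσ₂ : ∀ i, 0 ≤ σ₂ i)
    (π : Measure ((Fin d → ℝ) × (Fin d → ℝ))) [IsProbabilityMeasure π]
    (hπ₁ : π.fst = Measure.pi fun i => gaussianReal (μ₁ i) ((σ₁ i) ^ 2).toNNReal)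
    (hπ₂ : π.snd = Measure.pi fun i => gaussianReal (μ₂ i) ((σ₂ i) ^ 2).toNNReal) :
    (∑ i, (μ₁ i - μ₂ i) ^ 2) + ∑ i, (σ₁ i - σ₂ i) ^ 2 ≤
      ∫ z, ∑ i, (z.1 i - z.2 i) ^ 2 ∂π :=
  diag_gaussian_quadratic_cost_lower_bound_general d μ₁ μ₂ σ₁ σ₂ hσ₁ hσ₂ π hπ₁ hπ₂
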